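/- arXiv:2501.05582 — 5 statements merged into one kernel-verified Lean document; each statement's English description precedes it below -/
import Mathlib

section
/- Fix a positive integer n and a partition index p ≤ n. Consider the block-structured system in variables x^1,...,x^n ∈ R^2: A x^i ≤ b^i for i = 1,...,n (where A is the 6×2 matrix with rows (1,0),(−1,0),(0,1),(0,−1),(1,1),(−1,−1)), together with Σ_{i=1}^p x^i − Σ_{i=p+1}^n x^i = 0. If all b^i ∈ Z^6, then the polyhedron P defined by this system is an integral polyhedron (all its vertices have integer coordinates), and moreover each projection of P onto a single block of variables x^i is an integral polyhedron. -/
/-- The matrix with rows `(1,0),(−1,0),(0,1),(0,−1),(1,1),(−1,−1)`. -/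
def Amat : Matrix (Fin 6) (Fin 2) ℝ :=
  !![1, 0; -1, 0; 0, 1; 0, -1; 1, 1; -1, -1]

/-!
At an extreme point `x` of `P`, let `N_i ⊆ ℝ²` be the common kernel of the rows of `A` that are
tight at `x^i`. Moving `x` along any `(d_i)` with `d_i ∈ N_i` and `∑ ±d_i = 0` stays in `P` for
small steps, so extremality makes the family `(N_i)` independent, and in `ℝ²` at most two of the
`N_i` are nonzero. A block with `N_i = 0` has tight rows from two of the pairs `±(1,0)`,
`±(0,1)`, `±(1,1)`; any two of these vectors form a unimodular basis, so `x^i` is integral. If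
two blocks `a`, `c` are not pinned this way, the coupling equation makes the rows tight at `x^c`
integral at `x^a` as well, and all these rows together have kernel `N_a ∩ N_c = 0`. Once all
blocks but one are integral, the coupling equation settles the last one. Extreme points of a
projection of the compact set `P` lift to extreme points of `P` (Krein–Milman).
-/

open Filter Topology Matrix

local notation "ℤℝ" => RingHom.range (Int.castRingHom ℝ)

theorem eq_zero_of_mem_extremePoints_of_eventually {E : Type*} [AddCommGroup E] [Module ℝ E]
    {A : Set E} {x d : E} (hx : x ∈ A.extremePoints ℝ)
    (hd : ∀ᶠ ε in 𝓝 (0 : ℝ), x + ε • d ∈ A) : d = 0 := by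
  have hneg : ∀ᶠ ε in 𝓝 (0 : ℝ), x + (-ε) • d ∈ A :=
    (continuous_neg.tendsto' 0 0 neg_zero).eventually hd
  obtain ⟨ε, ⟨hplus, hminus⟩, hε⟩ :=
    ((hd.and hneg).filter_mono nhdsWithin_le_nhds).and (self_mem_nhdsWithin (s := {0}ᶜ)) |>.exists
  have hseg : x ∈ openSegment ℝ (x + ε • d) (x + (-ε) • d) :=
    ⟨1 / 2, 1 / 2, by norm_num, by norm_num, by norm_num, by module⟩
  have hxd : x + ε • d = x := ((mem_extremePoints.1 hx).2 _ hplus _ hminus hseg).1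
  simpa [Set.mem_compl_singleton_iff.1 hε] using hxd

theorem eventually_add_mul_le {a m c : ℝ} (ha : a ≤ c) (hm : a = c → m = 0) :
    ∀ᶠ ε in 𝓝 (0 : ℝ), a + ε * m ≤ c := by
  rcases ha.lt_or_eq with hlt | rfl
  · have : Tendsto (fun ε => a + ε * m) (𝓝 0) (𝓝 a) := by
      simpa using ((tendsto_id (x := 𝓝 (0 : ℝ))).mul_const m).const_add a
    exact (this.eventually (gt_mem_nhds hlt)).mono fun _ => le_of_lt
  · exact .of_forall fun ε => by simp [hm rfl]

theorem Subring.mem_of_signed_sum_eq_zero {R ι : Type*} [CommRing R] [Fintype ι]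
    (S : Subring R) {s y : ι → R} (hs : ∀ i, s i = 1 ∨ s i = -1) (hy : ∑ i, s i * y i = 0)
    {a : ι} (h : ∀ i ≠ a, y i ∈ S) : y a ∈ S := by
  classical
  have hsq : ∀ i, s i * s i = 1 := fun i => by rcases hs i with hi | hi <;> simp [hi]
  have hsS : ∀ i, s i ∈ S := fun i => by rcases hs i with hi | hi <;> simp [hi]
  rw [← Finset.add_sum_erase _ _ (Finset.mem_univ a), add_eq_zero_iff_eq_neg] at hy
  rw [← one_mul (y a), ← hsq a, mul_assoc, hy]
  exact S.mul_mem (hsS a) <| S.neg_mem <| S.sum_mem fun i hi =>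
    S.mul_mem (hsS i) (h i (Finset.ne_of_mem_erase hi))

theorem Amat_mulVec (v : Fin 2 → ℝ) :
    Amat *ᵥ v = ![v 0, -v 0, v 1, -v 1, v 0 + v 1, -(v 0 + v 1)] := by
  ext r; fin_cases r <;> simp [Amat, mulVec, dotProduct, Fin.sum_univ_two, add_comm]

theorem Amat_mulVec_mem {v : Fin 2 → ℝ} (hv : ∀ l, v l ∈ ℤℝ) (r : Fin 6) :
    (Amat *ᵥ v) r ∈ ℤℝ := by
  rw [Amat_mulVec]
  fin_cases r <;> simp [hv, add_mem]

def tightNullspace {m k : Type*} [Fintype k] (M : Matrix m k ℝ) (v : k → ℝ) (c : m → ℝ) :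
    Submodule ℝ (k → ℝ) where
  carrier := {u | ∀ r, (M *ᵥ v) r = c r → (M *ᵥ u) r = 0}
  add_mem' hu hw r hr := by simp [mulVec_add, hu r hr, hw r hr]
  zero_mem' r _ := by simp
  smul_mem' a u hu r hr := by simp [mulVec_smul, hu r hr]

theorem Amat_integral_of_rows {v : Fin 2 → ℝ} {R : Set (Fin 6)}
    (hR : ∀ r ∈ R, (Amat *ᵥ v) r ∈ ℤℝ) (hker : ∀ u, (∀ r ∈ R, (Amat *ᵥ u) r = 0) → u = 0) :
    ∀ l, v l ∈ ℤℝ := by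
  simp only [Amat_mulVec] at hR hker
  have h0 : 0 ∈ R ∨ 1 ∈ R → v 0 ∈ ℤℝ := by
    rintro (h | h)
    · exact hR 0 h
    · exact neg_mem_iff.1 (hR 1 h)
  have h1 : 2 ∈ R ∨ 3 ∈ R → v 1 ∈ ℤℝ := by
    rintro (h | h)
    · exact hR 2 h
    · exact neg_mem_iff.1 (hR 3 h)
  have h2 : 4 ∈ R ∨ 5 ∈ R → v 0 + v 1 ∈ ℤℝ := by
    rintro (h | h)
    · exact hR 4 h
    · exact neg_mem_iff.1 (hR 5 h)
  -- `![1, -1]`, `![1, 0]`, `![0, 1]` are killed only by the rows `4, 5`, resp. `2, 3`,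
  -- resp. `0, 1`, so `R` meets at least two of these three pairs
  have hne : ∀ u : Fin 2 → ℝ, u ≠ 0 →
      ∃ r ∈ R, ![u 0, -u 0, u 1, -u 1, u 0 + u 1, -(u 0 + u 1)] r ≠ 0 :=
    fun u hu => by by_contra! h; exact hu (hker u h)
  have m01 : (0 ∈ R ∨ 1 ∈ R) ∨ (2 ∈ R ∨ 3 ∈ R) := by
    obtain ⟨r, hr, hr0⟩ := hne ![1, -1] (by simp)
    fin_cases r <;> simp at hr hr0 <;> simp [hr]
  have m02 : (0 ∈ R ∨ 1 ∈ R) ∨ (4 ∈ R ∨ 5 ∈ R) := by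
    obtain ⟨r, hr, hr0⟩ := hne ![1, 0] (by simp)
    fin_cases r <;> simp at hr hr0 <;> simp [hr]
  have m12 : (2 ∈ R ∨ 3 ∈ R) ∨ (4 ∈ R ∨ 5 ∈ R) := by
    obtain ⟨r, hr, hr0⟩ := hne ![0, 1] (by simp)
    fin_cases r <;> simp at hr hr0 <;> simp [hr]
  intro l
  fin_cases l
  · by_cases hm0 : 0 ∈ R ∨ 1 ∈ R
    · exact h0 hm0
    · simpa using sub_mem (h2 (m02.resolve_left hm0)) (h1 (m01.resolve_left hm0))
  · by_cases hm1 : 2 ∈ R ∨ 3 ∈ R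
    · exact h1 hm1
    · simpa using sub_mem (h2 (m12.resolve_left hm1)) (h0 (m01.resolve_right hm1))

theorem Amat_integral_of_tightNullspace_eq_bot {v : Fin 2 → ℝ} {c : Fin 6 → ℝ}
    (hc : ∀ r, c r ∈ ℤℝ) (h : tightNullspace Amat v c = ⊥) : ∀ l, v l ∈ ℤℝ :=
  Amat_integral_of_rows (R := {r | (Amat *ᵥ v) r = c r}) (fun r hr => hr ▸ hc r)
    fun u hu => (Submodule.eq_bot_iff _).1 h u hu

def blockPolyhedron {ι : Type*} [Fintype ι] (s : ι → ℝ) (b : ι → Fin 6 → ℝ) :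
    Set (ι → Fin 2 → ℝ) :=
  {x | (∀ i, ∀ r : Fin 6, Amat.mulVec (x i) r ≤ b i r) ∧ (∑ i, s i • x i) = 0}

section blockPolyhedron

variable {ι : Type*} [Fintype ι] {s : ι → ℝ} {b : ι → Fin 6 → ℝ} {x : ι → Fin 2 → ℝ}

theorem eventually_add_smul_mem_blockPolyhedron (hx : x ∈ blockPolyhedron s b)
    {d : ι → Fin 2 → ℝ} (hd : ∀ i, d i ∈ tightNullspace Amat (x i) (b i))
    (hsum : ∑ i, s i • d i = 0) :
    ∀ᶠ ε in 𝓝 (0 : ℝ), x + ε • d ∈ blockPolyhedron s b := by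
  have hrows : ∀ i r, ∀ᶠ ε in 𝓝 (0 : ℝ), (Amat *ᵥ (x + ε • d) i) r ≤ b i r := fun i r => by
    simpa [mulVec_add, mulVec_smul] using eventually_add_mul_le (hx.1 i r) (hd i r)
  refine (eventually_all.2 fun i => eventually_all.2 (hrows i)).mono fun ε hε => ⟨hε, ?_⟩
  simp [smul_add, Finset.sum_add_distrib, smul_comm _ ε, ← Finset.smul_sum, hsum, hx.2]

theorem iSupIndep_tightNullspace (hs : ∀ i, s i ≠ 0)
    (hx : x ∈ (blockPolyhedron s b).extremePoints ℝ) :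
    iSupIndep fun i => tightNullspace Amat (x i) (b i) := by
  classical
  rw [iSupIndep_iff_finsetSum_eq_zero_imp_eq_zero]
  intro S t ht hsum
  set d : ι → Fin 2 → ℝ := fun i => if i ∈ S then (s i)⁻¹ • t i else 0
  have hd : ∀ i, d i ∈ tightNullspace Amat (x i) (b i) := fun i => by
    by_cases hi : i ∈ S
    · simpa [d, hi] using Submodule.smul_mem _ _ (ht i hi)
    · simp [d, hi]
  have hdsum : ∑ i, s i • d i = 0 := by
    simp [d, smul_smul, hs, Finset.sum_ite_mem, hsum]
  have hd0 := eq_zero_of_mem_extremePoints_of_eventually hx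
    (eventually_add_smul_mem_blockPolyhedron hx.1 hd hdsum)
  intro i hi
  simpa [d, hi, hs i] using congrFun hd0 i

theorem sum_mul_map_eq_zero_of_mem_blockPolyhedron (hx : x ∈ blockPolyhedron s b)
    (f : (Fin 2 → ℝ) →ₗ[ℝ] ℝ) :
    ∑ i, s i * f (x i) = 0 := by
  simpa [map_sum] using congrArg f hx.2

theorem isCompact_blockPolyhedron : IsCompact (blockPolyhedron s b) := by
  have hbox : blockPolyhedron s b ⊆ Set.univ.pi fun i => Set.univ.pi fun l =>
      Set.Icc (![-b i 1, -b i 3] l) (![b i 0, b i 2] l) := by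
    intro x hx i _ l _
    have hrow := hx.1 i
    simp only [Amat_mulVec] at hrow
    have h0 : x i 0 ≤ b i 0 := hrow 0
    have h1 : -x i 0 ≤ b i 1 := hrow 1
    have h2 : x i 1 ≤ b i 2 := hrow 2
    have h3 : -x i 1 ≤ b i 3 := hrow 3
    fin_cases l <;> simp <;> constructor <;> linarith
  refine (isCompact_univ_pi fun i => isCompact_univ_pi fun l => isCompact_Icc).of_isClosed_subset
    ?_ hbox
  simp only [blockPolyhedron, Set.ofPred_and, Set.ofPred_forall]
  exact (isClosed_iInter fun i => isClosed_iInter fun r => isClosed_le (by fun_prop)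
    continuous_const).inter (isClosed_eq (by fun_prop) continuous_const)

theorem exists_forall_ne_integral_of_iSupIndep [Nonempty ι] (hs : ∀ i, s i = 1 ∨ s i = -1)
    (hb : ∀ i r, b i r ∈ ℤℝ) (hx : x ∈ blockPolyhedron s b)
    (hind : iSupIndep fun i => tightNullspace Amat (x i) (b i)) :
    ∃ a, ∀ i ≠ a, ∀ l, x i l ∈ ℤℝ := by
  classical
  set N := fun i => tightNullspace Amat (x i) (b i)
  set U := Finset.univ.filter fun i => N i ≠ ⊥
  have hU : U.card ≤ 2 := by
    simpa [U, Fintype.card_subtype] using hind.subtype_ne_bot_le_finrank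
  have hpinned : ∀ i ∉ U, ∀ l, x i l ∈ ℤℝ := fun i hi =>
    Amat_integral_of_tightNullspace_eq_bot (hb i) (by simpa [U] using hi)
  rcases le_or_gt U.card 1 with hU1 | hU2
  · obtain ⟨a, ha⟩ := Finset.card_le_one_iff_subset_singleton.1 hU1
    exact ⟨a, fun i hi => hpinned i fun h => hi (Finset.mem_singleton.1 (ha h))⟩
  obtain ⟨a, c, hac, hUac⟩ := Finset.card_eq_two.1 (by omega : U.card = 2)
  have hothers : ∀ i, i ≠ a → i ≠ c → ∀ l, x i l ∈ ℤℝ := fun i hia hic =>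
    hpinned i (by simp [hUac, hia, hic])
  -- the rows tight at `x c` become integral at `x a` through the coupling equation,
  -- and together with the rows tight at `x a` they have trivial common kernel `N a ⊓ N c`
  have hxa : ∀ l, x a l ∈ ℤℝ := by
    refine Amat_integral_of_rows
      (R := {r | (Amat *ᵥ x a) r = b a r ∨ (Amat *ᵥ x c) r = b c r}) ?_ fun u hu => ?_
    · rintro r (hr | hr)
      · exact hr ▸ hb a r
      · refine Subring.mem_of_signed_sum_eq_zero _ hs
          (sum_mul_map_eq_zero_of_mem_blockPolyhedron hx (LinearMap.proj r ∘ₗ Amat.mulVecLin))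
          fun i hia => ?_
        by_cases hic : i = c
        · subst hic; exact (hr ▸ hb i r : (Amat *ᵥ x i) r ∈ ℤℝ)
        · exact Amat_mulVec_mem (hothers i hia hic) r
    · have hdisj : N a ⊓ N c = ⊥ := disjoint_iff.1 (hind.pairwiseDisjoint hac)
      exact (Submodule.eq_bot_iff _).1 hdisj u
        ⟨fun r hr => hu r (Or.inl hr), fun r hr => hu r (Or.inr hr)⟩
  refine ⟨c, fun i hic => ?_⟩
  by_cases hia : i = a
  · exact hia ▸ hxa
  · exact hothers i hia hic

theorem integral_of_mem_extremePoints (hs : ∀ i, s i = 1 ∨ s i = -1) (hb : ∀ i r, b i r ∈ ℤℝ)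
    (hx : x ∈ (blockPolyhedron s b).extremePoints ℝ) (i : ι) (l : Fin 2) : x i l ∈ ℤℝ := by
  classical
  have : Nonempty ι := ⟨i⟩
  have hs0 : ∀ i, s i ≠ 0 := fun i => by rcases hs i with h | h <;> simp [h]
  obtain ⟨a, ha⟩ :=
    exists_forall_ne_integral_of_iSupIndep hs hb hx.1 (iSupIndep_tightNullspace hs0 hx)
  by_cases hia : i = a
  · subst hia
    exact Subring.mem_of_signed_sum_eq_zero _ hs
      (sum_mul_map_eq_zero_of_mem_blockPolyhedron hx.1 (LinearMap.proj l)) fun j hj => ha j hj l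
  · exact ha i hia l

end blockPolyhedron

theorem blockSystem_integral_polyhedron_general (n p : ℕ)
    (b : Fin n → Fin 6 → ℝ) (hb : ∀ i r, ∃ z : ℤ, b i r = z) :
    let P : Set (Fin n → Fin 2 → ℝ) :=
      {x | (∀ i, ∀ r : Fin 6, Amat.mulVec (x i) r ≤ b i r) ∧
        (∑ i : Fin n, (if (i : ℕ) < p then (1 : ℝ) else -1) • x i) = 0}
    (∀ x ∈ Set.extremePoints ℝ P, ∀ i l, ∃ z : ℤ, x i l = (z : ℝ)) ∧
    (∀ i : Fin n, ∀ y ∈ Set.extremePoints ℝ ((fun x : Fin n → Fin 2 → ℝ => x i) '' P),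
      ∀ l, ∃ z : ℤ, y l = (z : ℝ)) := by
  intro P
  let s : Fin n → ℝ := fun i => if (i : ℕ) < p then 1 else -1
  have hP : P = blockPolyhedron s b := rfl
  have hs : ∀ i, s i = 1 ∨ s i = -1 := fun i => by by_cases h : (i : ℕ) < p <;> simp [s, h]
  have hbℤ : ∀ i r, b i r ∈ ℤℝ := fun i r => by
    obtain ⟨z, hz⟩ := hb i r
    exact ⟨z, by simp [hz]⟩
  have hvert : ∀ x ∈ P.extremePoints ℝ, ∀ i l, ∃ z : ℤ, x i l = z := fun x hx i l => by
    obtain ⟨z, hz⟩ := integral_of_mem_extremePoints hs hbℤ (hP ▸ hx) i l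
    exact ⟨z, by simpa using hz.symm⟩
  refine ⟨hvert, fun i y hy l => ?_⟩
  obtain ⟨x, hx, rfl⟩ := surjOn_extremePoints_image
    (ContinuousLinearMap.proj i).toContinuousAffineMap (hP ▸ isCompact_blockPolyhedron) hy
  exact hvert x hx i l

theorem blockSystem_integral_polyhedron (n p : ℕ) (hp : p ≤ n)
    (b : Fin n → Fin 6 → ℝ) (hb : ∀ i r, ∃ z : ℤ, b i r = z) :
    let P : Set (Fin n → Fin 2 → ℝ) :=
      {x | (∀ i, ∀ r : Fin 6, Amat.mulVec (x i) r ≤ b i r) ∧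
        (∑ i : Fin n, (if (i : ℕ) < p then (1 : ℝ) else -1) • x i) = 0}
    (∀ x ∈ Set.extremePoints ℝ P, ∀ i l, ∃ z : ℤ, x i l = (z : ℝ)) ∧
    (∀ i : Fin n, ∀ y ∈ Set.extremePoints ℝ ((fun x : Fin n → Fin 2 → ℝ => x i) '' P),
      ∀ l, ∃ z : ℤ, y l = (z : ℝ)) :=
  blockSystem_integral_polyhedron_general n p b hb
end

section
/- Let K be a finite index set, and for each k ∈ K let I_k, J_k ⊆ {1,...,ℓ} and fix reals a_i, b_j. For a symmetric set D ⊆ [0,1] (i.e., D = 1−D), define F(D) as the set of functions f : D×[ℓ] → R satisfying Σ_{i∈I_k} a_i f(x,i) + Σ_{j∈J_k} b_j f(1−x,j) = 0 for all x ∈ D and k ∈ K. Then for any integer m > 2 the following are equivalent: (1) F([0,1]) contains a nonzero function; (2) F([0,1]) contains a nonzero continuous piecewise linear function vanishing at x = 0 and x = 1 in every coordinate i; (3) F({1/m, (m−1)/m}) contains a nonzero function. -/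
/-- `f` satisfies the system of functional equations on the symmetric domain `D`. -/
def SatSystem {ℓ : ℕ} {K : Type*} (I J : K → Finset (Fin ℓ)) (a b : Fin ℓ → ℝ)
    (D : Set ℝ) (f : ℝ → Fin ℓ → ℝ) : Prop :=
  ∀ x ∈ D, ∀ k : K,
    (∑ i ∈ I k, a i * f x i) + (∑ j ∈ J k, b j * f (1 - x) j) = 0

/-- `g : ℝ → ℝ` is continuous piecewise linear on `[0,1]`: continuous there, and there is a
finite set of breakpoints away from which it is affine. -/
def CPwl (g : ℝ → ℝ) : Prop :=
  ContinuousOn g (Set.Icc 0 1) ∧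
  ∃ B : Finset ℝ, ∀ x y : ℝ, 0 ≤ x → y ≤ 1 →
    (∀ b ∈ B, b ∉ Set.Ioo x y) → ∃ c d : ℝ, ∀ z ∈ Set.Icc x y, g z = c * z + d

/-!
Because the system only couples the values at `x` and `1 - x`, a solution on `[0,1]` that is
nonzero at `x₀` can be transported to any other symmetric pair `{p, 1 - p}` by sending `p ↦ x₀`,
`1 - p ↦ 1 - x₀`. Conversely, a solution `g` on `{p, 1 - p}` extends to `[0,1]` as
`t x • g p + t (1 - x) • g (1 - p)` for any weight `t`, since the system is linear. Taking for `t`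
the hat function supported on `[0, 2p]` with peak `1` at `p` gives, when `3p ≤ 1`, a continuous
piecewise linear solution vanishing at `0` and `1` that agrees with `g` on `{p, 1 - p}`.
-/

open Set

section CPwl

variable {f g : ℝ → ℝ}

theorem CPwl.add (hf : CPwl f) (hg : CPwl g) : CPwl fun x => f x + g x := by
  obtain ⟨hfc, B, hB⟩ := hf
  obtain ⟨hgc, C, hC⟩ := hg
  refine ⟨hfc.add hgc, B ∪ C, fun x y hx hy hBC => ?_⟩
  obtain ⟨c₁, d₁, h₁⟩ := hB x y hx hy fun b hb => hBC b (Finset.mem_union_left C hb)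
  obtain ⟨c₂, d₂, h₂⟩ := hC x y hx hy fun b hb => hBC b (Finset.mem_union_right B hb)
  exact ⟨c₁ + c₂, d₁ + d₂, fun z hz => by simp only [h₁ z hz, h₂ z hz]; ring⟩

theorem CPwl.const_mul (hf : CPwl f) (r : ℝ) : CPwl fun x => r * f x := by
  obtain ⟨hfc, B, hB⟩ := hf
  refine ⟨continuousOn_const.mul hfc, B, fun x y hx hy hBxy => ?_⟩
  obtain ⟨c, d, h⟩ := hB x y hx hy hBxy
  exact ⟨r * c, r * d, fun z hz => by simp only [h z hz]; ring⟩

theorem CPwl.mul_const (hf : CPwl f) (r : ℝ) : CPwl fun x => f x * r := by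
  simp_rw [mul_comm _ r]
  exact hf.const_mul r

theorem CPwl.sub (hf : CPwl f) (hg : CPwl g) : CPwl fun x => f x - g x := by
  simpa only [neg_one_mul, ← sub_eq_add_neg] using hf.add (hg.const_mul (-1))

theorem CPwl.comp_one_sub (hf : CPwl f) : CPwl fun x => f (1 - x) := by
  obtain ⟨hfc, B, hB⟩ := hf
  refine ⟨hfc.comp (by fun_prop) fun x hx => ⟨by linarith [hx.2], by linarith [hx.1]⟩,
    B.image (1 - ·), fun x y hx hy hBxy => ?_⟩
  obtain ⟨c, d, h⟩ := hB (1 - y) (1 - x) (by linarith) (by linarith) fun b hb hbxy =>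
    hBxy (1 - b) (Finset.mem_image_of_mem _ hb) ⟨by linarith [hbxy.2], by linarith [hbxy.1]⟩
  exact ⟨-c, c + d, fun z hz => by
    simp only [h (1 - z) ⟨by linarith [hz.2], by linarith [hz.1]⟩]; ring⟩

theorem cpwl_abs_sub (c : ℝ) : CPwl fun x => |x - c| := by
  refine ⟨by fun_prop, {c}, fun x y _ _ hc => ?_⟩
  rcases not_and_or.mp (hc c (Finset.mem_singleton_self c)) with hxc | hyc
  · exact ⟨1, -c, fun z hz => by simp only [abs_of_nonneg (by linarith [hz.1] : 0 ≤ z - c)]; ring⟩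
  · exact ⟨-1, c, fun z hz => by simp only [abs_of_nonpos (by linarith [hz.2] : z - c ≤ 0)]; ring⟩

end CPwl

section Hat

/-- The hat function supported on `[0, 2p]` with peak `1` at `p`, written through absolute values
so that it is visibly piecewise linear. -/
noncomputable def hat (p x : ℝ) : ℝ := (2 * p)⁻¹ * (|x| - 2 * |x - p| + |x - 2 * p|)

theorem cpwl_hat (p : ℝ) : CPwl (hat p) := by
  have h := ((cpwl_abs_sub 0).sub ((cpwl_abs_sub p).const_mul 2)).add (cpwl_abs_sub (2 * p))
  simp only [sub_zero] at h
  exact h.const_mul (2 * p)⁻¹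

variable {p : ℝ}

theorem hat_zero (hp : 0 < p) : hat p 0 = 0 := by
  simp only [hat, abs_zero, zero_sub, abs_neg, abs_of_pos hp, abs_of_pos (by linarith : 0 < 2 * p)]
  ring

theorem hat_self (hp : 0 < p) : hat p p = 1 := by
  simp only [hat, sub_self, abs_zero, abs_of_pos hp, show p - 2 * p = -p by ring, abs_neg]
  field_simp
  ring

theorem hat_of_two_mul_le {x : ℝ} (hp : 0 < p) (hx : 2 * p ≤ x) : hat p x = 0 := by
  simp only [hat, abs_of_nonneg (by linarith : 0 ≤ x), abs_of_nonneg (by linarith : 0 ≤ x - p),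
    abs_of_nonneg (by linarith : 0 ≤ x - 2 * p)]
  ring

end Hat

section SatSystem

variable {ℓ : ℕ} {K : Type*} {I J : K → Finset (Fin ℓ)} {a b : Fin ℓ → ℝ}

theorem SatSystem.comp {D D' : Set ℝ} {f : ℝ → Fin ℓ → ℝ} (hf : SatSystem I J a b D f)
    {φ : ℝ → ℝ} (hφ : ∀ y ∈ D', φ y ∈ D ∧ φ (1 - y) = 1 - φ y) :
    SatSystem I J a b D' (f ∘ φ) := fun y hy k => by
  simpa only [Function.comp_apply, (hφ y hy).2] using hf (φ y) (hφ y hy).1 k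

theorem SatSystem.extend_of_pair {p : ℝ} {g : ℝ → Fin ℓ → ℝ}
    (hg : SatSystem I J a b {p, 1 - p} g) (t : ℝ → ℝ) (D : Set ℝ) :
    SatSystem I J a b D fun x i => t x * g p i + t (1 - x) * g (1 - p) i := by
  intro x _ k
  have hp := hg p (by simp) k
  have hq := hg (1 - p) (by simp) k
  simp only [sub_sub_cancel] at hq ⊢
  simp only [mul_add, Finset.sum_add_distrib, mul_left_comm _ (t _), ← Finset.mul_sum]
  linear_combination t x * hp + t (1 - x) * hq

def HasNontrivialSolution (I J : K → Finset (Fin ℓ)) (a b : Fin ℓ → ℝ) (D : Set ℝ) : Prop :=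
  ∃ f : ℝ → Fin ℓ → ℝ, SatSystem I J a b D f ∧ ∃ x ∈ D, ∃ i, f x i ≠ 0

theorem HasNontrivialSolution.pair_of_Icc {p : ℝ} (hp : p ≠ 1 - p)
    (h : HasNontrivialSolution I J a b (Icc 0 1)) :
    HasNontrivialSolution I J a b {p, 1 - p} := by
  obtain ⟨f, hf, x₀, hx₀, i, hi⟩ := h
  have hq : 1 - p ≠ p := hp.symm
  refine ⟨f ∘ fun y => if y = p then x₀ else 1 - x₀, hf.comp ?_, p, by simp, i, by simpa using hi⟩
  rintro y (rfl | rfl)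
  · simpa [hq] using hx₀
  · simpa [hq] using And.comm.mp hx₀

theorem HasNontrivialSolution.exists_cpwl_of_pair {p : ℝ} (hp : 0 < p) (h3p : 3 * p ≤ 1)
    (h : HasNontrivialSolution I J a b {p, 1 - p}) :
    ∃ f : ℝ → Fin ℓ → ℝ, SatSystem I J a b (Icc 0 1) f ∧
      (∀ i, CPwl fun x => f x i) ∧ (∀ i, f 0 i = 0 ∧ f 1 i = 0) ∧
      ∃ x ∈ Icc (0 : ℝ) 1, ∃ i, f x i ≠ 0 := by
  obtain ⟨g, hg, x₀, hx₀, i₀, hi₀⟩ := h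
  have h0 := hat_zero hp
  have h1 := hat_of_two_mul_le hp (by linarith : 2 * p ≤ 1)
  have hpeak := hat_self hp
  have hfar := hat_of_two_mul_le hp (by linarith : 2 * p ≤ 1 - p)
  refine ⟨fun x i => hat p x * g p i + hat p (1 - x) * g (1 - p) i, hg.extend_of_pair _ _,
    fun i => ((cpwl_hat p).mul_const _).add ((cpwl_hat p).comp_one_sub.mul_const _),
    fun i => ?_, x₀, ?_, i₀, ?_⟩
  · simp [h0, h1]
  · rcases hx₀ with rfl | rfl <;> constructor <;> linarith
  · rcases hx₀ with rfl | rfl <;> simpa [hpeak, hfar] using hi₀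

end SatSystem

theorem nontrivial_infinite_system_iff_finite_system_general
    {ℓ : ℕ} {K : Type*} (I J : K → Finset (Fin ℓ)) (a b : Fin ℓ → ℝ)
    (m : ℕ) (hm : 2 < m) :
    ((∃ f : ℝ → Fin ℓ → ℝ, SatSystem I J a b (Set.Icc 0 1) f ∧
        ∃ x ∈ Set.Icc (0 : ℝ) 1, ∃ i, f x i ≠ 0) ↔
      (∃ f : ℝ → Fin ℓ → ℝ, SatSystem I J a b (Set.Icc 0 1) f ∧
        (∀ i, CPwl (fun x => f x i)) ∧ (∀ i, f 0 i = 0 ∧ f 1 i = 0) ∧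
        ∃ x ∈ Set.Icc (0 : ℝ) 1, ∃ i, f x i ≠ 0)) ∧
    ((∃ f : ℝ → Fin ℓ → ℝ, SatSystem I J a b (Set.Icc 0 1) f ∧
        ∃ x ∈ Set.Icc (0 : ℝ) 1, ∃ i, f x i ≠ 0) ↔
      (∃ f : ℝ → Fin ℓ → ℝ,
        SatSystem I J a b {(1 : ℝ) / m, (m - 1 : ℝ) / m} f ∧
        ∃ x ∈ ({(1 : ℝ) / m, (m - 1 : ℝ) / m} : Set ℝ), ∃ i, f x i ≠ 0)) := by
  have hm3 : (3 : ℝ) ≤ m := by exact_mod_cast hm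
  have hp0 : (0 : ℝ) < 1 / m := by positivity
  have h3p : 3 * (1 / m : ℝ) ≤ 1 := by rw [mul_one_div, div_le_one (by positivity)]; exact hm3
  have hq : (m - 1 : ℝ) / m = 1 - 1 / m := by field_simp
  have to_pair := HasNontrivialSolution.pair_of_Icc (I := I) (J := J) (a := a) (b := b)
    (p := 1 / m) (by linarith)
  have to_cpwl := HasNontrivialSolution.exists_cpwl_of_pair (I := I) (J := J) (a := a) (b := b)
    hp0 h3p
  rw [hq]
  refine ⟨⟨fun h => to_cpwl (to_pair h), fun ⟨f, hf, _, _, hx⟩ => ⟨f, hf, hx⟩⟩, to_pair, fun h => ?_⟩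
  obtain ⟨f, hf, -, -, hx⟩ := to_cpwl h
  exact ⟨f, hf, hx⟩

theorem nontrivial_infinite_system_iff_finite_system
    {ℓ : ℕ} {K : Type*} [Finite K] (I J : K → Finset (Fin ℓ)) (a b : Fin ℓ → ℝ)
    (m : ℕ) (hm : 2 < m) :
    ((∃ f : ℝ → Fin ℓ → ℝ, SatSystem I J a b (Set.Icc 0 1) f ∧
        ∃ x ∈ Set.Icc (0 : ℝ) 1, ∃ i, f x i ≠ 0) ↔
      (∃ f : ℝ → Fin ℓ → ℝ, SatSystem I J a b (Set.Icc 0 1) f ∧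
        (∀ i, CPwl (fun x => f x i)) ∧ (∀ i, f 0 i = 0 ∧ f 1 i = 0) ∧
        ∃ x ∈ Set.Icc (0 : ℝ) 1, ∃ i, f x i ≠ 0)) ∧
    ((∃ f : ℝ → Fin ℓ → ℝ, SatSystem I J a b (Set.Icc 0 1) f ∧
        ∃ x ∈ Set.Icc (0 : ℝ) 1, ∃ i, f x i ≠ 0) ↔
      (∃ f : ℝ → Fin ℓ → ℝ,
        SatSystem I J a b {(1 : ℝ) / m, (m - 1 : ℝ) / m} f ∧
        ∃ x ∈ ({(1 : ℝ) / m, (m - 1 : ℝ) / m} : Set ℝ), ∃ i, f x i ≠ 0)) :=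
  nontrivial_infinite_system_iff_finite_system_general I J a b m hm
end

section
/- (Hidden Interval Lemma, 2D) Let f, g, h : R^2 → R be continuous and let F, F̃ ⊆ R^2 × R^2 be convex sets with f(u)+g(v)=h(u+v) for all (u,v) ∈ F ∪ F̃. Suppose the sum-projection p3(F) := {u+v : (u,v)∈F} equals p3(F̃) and is full-dimensional in R^2; suppose p1(F) = {u¹ + λ d¹ : λ∈[0,1]}, p2(F) = {u² + λ d² : λ∈[0,1]}, p1(F̃) = {ũ¹ + λ d¹ : λ∈[0,1]} (same direction d¹), p2(F̃) = {ũ² + λ d̃² : λ∈[0,1]}, where (d¹,d²), (d¹,d̃²), and (d²,d̃²) are each linearly independent pairs. Then there exists c ∈ R^2 such that f, g, h are affine with gradient c with respect to the line span(d¹) over p_i(F) and p_i(F̃) for i = 1,2,3. -/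
/-!
Let `P = p3(F) = p3(F̃)`, `φ l = f (u1 + l • d1)` and `ψ l = f (ut1 + l • d1)`. Via `F`, the
increment `h (x + t • d1) - h x` on `P` is the increment of `φ` from the `d1`-coordinate of `x`
in the basis `(d1, d2)`; via `F̃` it is the increment of `ψ` from the `d1`-coordinate of `x` in
the basis `(d1, dt2)`. Near an interior point of `P`, moving along `dt2` changes the first of
these coordinates and fixes the second, so the increments of `φ` are locally independent of the
base point. Hence `φ` satisfies Jensen's equation locally on `(0, 1)`, and a maximum principle
makes it affine on `[0, 1]`. Symmetrically `ψ` is affine, with the same slope since both compute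
the increments of `h`. On `p2(F)` and `p2(F̃)` no two distinct points differ by a multiple of `d1`.
-/

noncomputable section

abbrev V2 := Fin 2 → ℝ

def proj1 (F : Set (V2 × V2)) : Set V2 := (fun p : V2 × V2 => p.1) '' F
def proj2 (F : Set (V2 × V2)) : Set V2 := (fun p : V2 × V2 => p.2) '' F
def proj3 (F : Set (V2 × V2)) : Set V2 := (fun p : V2 × V2 => p.1 + p.2) '' F

/-- `φ` is affine with gradient `c` with respect to the line spanned by `d` over `U`. -/
def AffineWrtLine (φ : V2 → ℝ) (U : Set V2) (d c : V2) : Prop :=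
  ∀ x ∈ U, ∀ y ∈ U, (∃ r : ℝ, y - x = r • d) → φ y - φ x = dotProduct c (y - x)

open Set Filter Topology

theorem nonpos_of_eventually_midpoint {g : ℝ → ℝ} {a b : ℝ} (hg : ContinuousOn g (Icc a b))
    (ha : g a ≤ 0) (hb : g b ≤ 0)
    (hmid : ∀ s ∈ Ioo a b, ∀ᶠ t in 𝓝 0, g (s - t) + g (s + t) = 2 * g s) :
    ∀ x ∈ Icc a b, g x ≤ 0 := by
  -- at the leftmost point where a positive maximum is attained, the midpoint identity fails
  intro x hx
  by_contra! hpos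
  obtain ⟨m, hm, hmax⟩ := isCompact_Icc.exists_isMaxOn ⟨x, hx⟩ hg
  have hS : IsCompact (Icc a b ∩ g ⁻¹' {g m}) :=
    isCompact_Icc.of_isClosed_subset
      (hg.preimage_isClosed_of_isClosed isClosed_Icc isClosed_singleton) inter_subset_left
  obtain ⟨s, ⟨hs, hsm⟩, hleast⟩ := hS.exists_isLeast ⟨m, hm, rfl⟩
  have hgs : 0 < g s := (hsm : g s = g m) ▸ hpos.trans_le (hmax hx)
  have has : a < s := hs.1.lt_of_ne (by rintro rfl; linarith)
  have hsb : s < b := hs.2.lt_of_ne (by rintro rfl; linarith)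
  obtain ⟨ε, hε, hε'⟩ := Metric.eventually_nhds_iff.1 (hmid s ⟨has, hsb⟩)
  obtain ⟨t, ht, htlt⟩ := exists_between (lt_min hε (lt_min (sub_pos.2 has) (sub_pos.2 hsb)))
  simp only [lt_min_iff] at htlt
  obtain ⟨htε, hta, htb⟩ := htlt
  have hleft : g (s - t) < g m := by
    refine (hmax ⟨by linarith, by linarith⟩).lt_of_ne fun heq => ?_
    have := hleast ⟨⟨by linarith, by linarith⟩, heq⟩
    linarith
  have hright : g (s + t) ≤ g m := hmax ⟨by linarith, by linarith⟩
  have := hε' (show dist t 0 < ε by rw [Real.dist_0_eq_abs, abs_of_pos ht]; exact htε)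
  simp only [mem_preimage, mem_singleton_iff] at hsm
  linarith

theorem exists_slope_of_eventually_midpoint {φ : ℝ → ℝ} {a b : ℝ} (hab : a < b)
    (hφ : ContinuousOn φ (Icc a b))
    (hmid : ∀ s ∈ Ioo a b, ∀ᶠ t in 𝓝 0, φ (s - t) + φ (s + t) = 2 * φ s) :
    ∃ C, ∀ y ∈ Icc a b, ∀ z ∈ Icc a b, φ z - φ y = C * (z - y) := by
  set C := (φ b - φ a) / (b - a)
  set g : ℝ → ℝ := fun x => φ x - φ a - C * (x - a)
  have hgb : g b = 0 := by
    have := sub_ne_zero.2 hab.ne'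
    simp only [g, C]; field_simp; ring
  have hgmid : ∀ s ∈ Ioo a b, ∀ᶠ t in 𝓝 0, g (s - t) + g (s + t) = 2 * g s := fun s hs =>
    (hmid s hs).mono fun t ht => by simp only [g]; linarith
  have hgc : ContinuousOn g (Icc a b) := by fun_prop
  have hle := nonpos_of_eventually_midpoint hgc (by simp [g]) hgb.le hgmid
  have hge := nonpos_of_eventually_midpoint hgc.neg (by simp [g]) (by simp [hgb])
    fun s hs => (hgmid s hs).mono fun t ht => by simp only [Pi.neg_apply]; linarith
  refine ⟨C, fun y hy z hz => ?_⟩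
  have hy0 := hle y hy; have hy1 := hge y hy; have hz0 := hle z hz; have hz1 := hge z hz
  simp only [g, Pi.neg_apply] at hy0 hy1 hz0 hz1
  linarith

theorem Convex.exists_mem_interior_apply_eq {E : Type*} [AddCommGroup E] [Module ℝ E]
    [TopologicalSpace E] [IsTopologicalAddGroup E] [ContinuousSMul ℝ E] {s : Set E}
    (hs : Convex ℝ s) (hne : (interior s).Nonempty) (α : E →L[ℝ] ℝ) {z₁ z₂ : E}
    (h₁ : z₁ ∈ s) (h₂ : z₂ ∈ s) {p : ℝ} (hp₁ : α z₁ < p) (hp₂ : p < α z₂) :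
    ∃ x ∈ interior s, α x = p := by
  have hnear : ∀ z ∈ s, ∀ U : Set ℝ, IsOpen U → α z ∈ U → ∃ y ∈ interior s, α y ∈ U := by
    intro z hz U hU hzU
    have hz' : z ∈ closure (interior s) :=
      hs.closure_interior_eq_closure_of_nonempty_interior hne ▸ subset_closure hz
    obtain ⟨y, hyU, hy⟩ := mem_closure_iff.1 hz' _ (hU.preimage α.continuous) hzU
    exact ⟨y, hy, hyU⟩
  obtain ⟨y₁, hy₁, hy₁p⟩ := hnear z₁ h₁ (Iio p) isOpen_Iio hp₁
  obtain ⟨y₂, hy₂, hy₂p⟩ := hnear z₂ h₂ (Ioi p) isOpen_Ioi hp₂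
  exact (hs.interior.linear_image α.toLinearMap).ordConnected.out ⟨y₁, hy₁, rfl⟩ ⟨y₂, hy₂, rfl⟩
    ⟨le_of_lt hy₁p, le_of_lt hy₂p⟩

theorem eventually_add_smul_mem {E : Type*} [AddCommGroup E] [Module ℝ E]
    [TopologicalSpace E] [ContinuousAdd E] [ContinuousSMul ℝ E] {s : Set E} {x : E}
    (hx : x ∈ interior s) (v : E) : ∀ᶠ t in 𝓝 (0 : ℝ), x + t • v ∈ s := by
  have hcont : Continuous fun t : ℝ => x + t • v := by fun_prop
  have := hcont.tendsto 0
  rw [zero_smul, add_zero] at this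
  exact this (mem_interior_iff_mem_nhds.1 hx)

theorem exists_dual_of_linearIndependent {E : Type*} [NormedAddCommGroup E] [NormedSpace ℝ E]
    [FiniteDimensional ℝ E] (hE : Module.finrank ℝ E = 2) {d₁ d₂ : E}
    (hli : LinearIndependent ℝ ![d₁, d₂]) :
    ∃ α : E →L[ℝ] ℝ, α d₁ = 1 ∧ α d₂ = 0 ∧ ∀ v, LinearIndependent ℝ ![d₂, v] → α v ≠ 0 := by
  have hcard : Fintype.card (Fin 2) = Module.finrank ℝ E := by simp [hE]
  set B := basisOfLinearIndependentOfCardEqFinrank hli hcard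
  have hB : ⇑B = ![d₁, d₂] := coe_basisOfLinearIndependentOfCardEqFinrank hli hcard
  have hB₀ : B 0 = d₁ := by simp [hB]
  have hB₁ : B 1 = d₂ := by simp [hB]
  refine ⟨LinearMap.toContinuousLinearMap (B.coord 0), ?_, ?_, fun v hv hv0 => ?_⟩
  · simp [← hB₀]
  · simp [← hB₁]
  have hrepr := B.sum_repr v
  simp only [Fin.sum_univ_two, hB₀, hB₁] at hrepr
  simp only [LinearMap.coe_toContinuousLinearMap', Module.Basis.coord_apply] at hv0
  rw [hv0, zero_smul, zero_add] at hrepr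
  have := (LinearIndependent.pair_iff.1 hv (B.repr v 1) (-1) (by rw [hrepr]; simp)).2
  norm_num at this

theorem AffineWrtLine.dotProduct_eq {φ : V2 → ℝ} {U : Set V2} {d c c' : V2}
    (h : AffineWrtLine φ U d c) (h' : AffineWrtLine φ U d c') (hU : (interior U).Nonempty) :
    c ⬝ᵥ d = c' ⬝ᵥ d := by
  obtain ⟨x, hx⟩ := hU
  obtain ⟨t, hxt, ht⟩ :=
    ((eventually_add_smul_mem hx d).filter_mono nhdsWithin_le_nhds).and
      self_mem_nhdsWithin |>.exists (f := 𝓝[≠] (0 : ℝ))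
  have hdiff : (x + t • d) - x = t • d := add_sub_cancel_left x _
  have := (h x (interior_subset hx) _ hxt ⟨t, hdiff⟩).symm.trans
    (h' x (interior_subset hx) _ hxt ⟨t, hdiff⟩)
  rw [hdiff, dotProduct_smul, dotProduct_smul, smul_eq_mul, smul_eq_mul] at this
  exact mul_left_cancel₀ ht this

theorem affineWrtLine_of_linearIndependent (φ : V2 → ℝ) (u d d' c : V2)
    (hli : LinearIndependent ℝ ![d, d']) :
    AffineWrtLine φ {x | ∃ l ∈ Icc (0 : ℝ) 1, x = u + l • d'} d c := by
  rintro _ ⟨l, -, rfl⟩ _ ⟨l', -, rfl⟩ ⟨r, hr⟩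
  have hr0 := (LinearIndependent.pair_iff.1 hli r (l - l') (by
    rw [← hr, sub_smul]; abel)).1
  rw [hr0, zero_smul] at hr
  rw [hr, sub_eq_zero.1 hr, sub_self, dotProduct_zero]

theorem exists_dotProduct_eq {d : V2} (hd : d ≠ 0) (C : ℝ) : ∃ c : V2, c ⬝ᵥ d = C :=
  ⟨(C / (d ⬝ᵥ d)) • d, by
    rw [smul_dotProduct, smul_eq_mul, div_mul_cancel₀ _ (dotProduct_self_eq_zero.not.2 hd)]⟩

theorem convex_proj3 {F : Set (V2 × V2)} (hF : Convex ℝ F) : Convex ℝ (proj3 F) :=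
  hF.linear_image (LinearMap.fst ℝ V2 V2 + LinearMap.snd ℝ V2 V2)

/-- `p3(F)` lies in the parallelogram `u₁ + u₂ + [0,1] • d₁ + [0,1] • d₂`, and
`α (x - (u₁ + u₂))` is the `d₁`-coordinate of `x` in it. -/
structure IsParallelogramCoord (F : Set (V2 × V2)) (u₁ u₂ d₁ d₂ : V2) (α : V2 →L[ℝ] ℝ) :
    Prop where
  proj1_eq : proj1 F = {x | ∃ l ∈ Icc (0 : ℝ) 1, x = u₁ + l • d₁}
  proj2_eq : proj2 F = {x | ∃ l ∈ Icc (0 : ℝ) 1, x = u₂ + l • d₂}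
  apply_fst : α d₁ = 1
  apply_snd : α d₂ = 0

namespace IsParallelogramCoord

variable {F G : Set (V2 × V2)} {u₁ u₂ v₁ v₂ d₁ d₂ d₃ : V2} {α β : V2 →L[ℝ] ℝ}

theorem apply_add_sub (hF : IsParallelogramCoord F u₁ u₂ d₁ d₂ α) (l m : ℝ) :
    α (u₁ + l • d₁ + (u₂ + m • d₂) - (u₁ + u₂)) = l := by
  rw [show u₁ + l • d₁ + (u₂ + m • d₂) - (u₁ + u₂) = l • d₁ + m • d₂ by abel]
  simp [hF.apply_fst, hF.apply_snd]

theorem fst_eq (hF : IsParallelogramCoord F u₁ u₂ d₁ d₂ α) {p : V2 × V2} (hp : p ∈ F) :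
    p.1 = u₁ + α (p.1 + p.2 - (u₁ + u₂)) • d₁ ∧ α (p.1 + p.2 - (u₁ + u₂)) ∈ Icc 0 1 := by
  have h₁ : p.1 ∈ proj1 F := ⟨p, hp, rfl⟩
  have h₂ : p.2 ∈ proj2 F := ⟨p, hp, rfl⟩
  rw [hF.proj1_eq] at h₁
  rw [hF.proj2_eq] at h₂
  obtain ⟨l, hl, hpl⟩ := h₁
  obtain ⟨m, -, hpm⟩ := h₂
  rw [hpl, hpm, hF.apply_add_sub]
  exact ⟨rfl, hl⟩

theorem apply_sub_mem_Icc (hF : IsParallelogramCoord F u₁ u₂ d₁ d₂ α) {x : V2}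
    (hx : x ∈ proj3 F) : α (x - (u₁ + u₂)) ∈ Icc 0 1 := by
  obtain ⟨p, hp, rfl⟩ := hx
  exact (hF.fst_eq hp).2

theorem exists_apply_sub_eq (hF : IsParallelogramCoord F u₁ u₂ d₁ d₂ α) {l : ℝ}
    (hl : l ∈ Icc 0 1) : ∃ x ∈ proj3 F, α (x - (u₁ + u₂)) = l := by
  have h₁ : u₁ + l • d₁ ∈ proj1 F := by rw [hF.proj1_eq]; exact ⟨l, hl, rfl⟩
  obtain ⟨p, hp, hpl⟩ := h₁
  have h₂ : p.2 ∈ proj2 F := ⟨p, hp, rfl⟩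
  rw [hF.proj2_eq] at h₂
  obtain ⟨m, -, hpm⟩ := h₂
  refine ⟨p.1 + p.2, ⟨p, hp, rfl⟩, ?_⟩
  simp only at hpl
  rw [hpl, hpm, hF.apply_add_sub]

variable {f g h : V2 → ℝ}

theorem sub_eq_sub (hF : IsParallelogramCoord F u₁ u₂ d₁ d₂ α)
    (hadd : ∀ p ∈ F, f p.1 + g p.2 = h (p.1 + p.2)) {x : V2} {t : ℝ} (hx : x ∈ proj3 F)
    (hxt : x + t • d₁ ∈ proj3 F) :
    h (x + t • d₁) - h x =
      f (u₁ + (α (x - (u₁ + u₂)) + t) • d₁) - f (u₁ + α (x - (u₁ + u₂)) • d₁) := by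
  obtain ⟨p, hp, rfl⟩ := hx
  obtain ⟨q, hq, hqp⟩ := hxt
  simp only at hqp
  have hcoord : α (q.1 + q.2 - (u₁ + u₂)) = α (p.1 + p.2 - (u₁ + u₂)) + t := by
    rw [hqp, add_sub_right_comm, map_add, map_smul, hF.apply_fst, smul_eq_mul, mul_one]
  obtain ⟨hp₁, -⟩ := hF.fst_eq hp
  obtain ⟨hq₁, -⟩ := hF.fst_eq hq
  rw [hcoord] at hq₁
  have hq₂ : q.2 = p.2 := by linear_combination (norm := module) hqp - hq₁ + hp₁
  rw [← hqp, ← hadd q hq, ← hadd p hp, hq₂, ← hq₁, ← hp₁]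
  ring

theorem affineWrtLine_proj1 (hF : IsParallelogramCoord F u₁ u₂ d₁ d₂ α) {C : ℝ}
    (hC : ∀ l ∈ Icc (0 : ℝ) 1, ∀ l' ∈ Icc (0 : ℝ) 1,
      f (u₁ + l' • d₁) - f (u₁ + l • d₁) = C * (l' - l))
    {c : V2} (hc : c ⬝ᵥ d₁ = C) : AffineWrtLine f (proj1 F) d₁ c := by
  rw [hF.proj1_eq]
  rintro _ ⟨l, hl, rfl⟩ _ ⟨l', hl', rfl⟩ -
  rw [hC l hl l' hl', show u₁ + l' • d₁ - (u₁ + l • d₁) = (l' - l) • d₁ by module,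
    dotProduct_smul, hc, smul_eq_mul, mul_comm]

theorem affineWrtLine_proj3 (hF : IsParallelogramCoord F u₁ u₂ d₁ d₂ α)
    (hadd : ∀ p ∈ F, f p.1 + g p.2 = h (p.1 + p.2)) {C : ℝ}
    (hC : ∀ l ∈ Icc (0 : ℝ) 1, ∀ l' ∈ Icc (0 : ℝ) 1,
      f (u₁ + l' • d₁) - f (u₁ + l • d₁) = C * (l' - l))
    {c : V2} (hc : c ⬝ᵥ d₁ = C) : AffineWrtLine h (proj3 F) d₁ c := by
  rintro x hx y hy ⟨r, hr⟩
  obtain rfl : y = x + r • d₁ := by rw [← hr]; abel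
  have hxr := hF.apply_sub_mem_Icc hy
  rw [add_sub_right_comm, map_add, map_smul, hF.apply_fst, smul_eq_mul, mul_one] at hxr
  rw [hF.sub_eq_sub hadd hx hy, hC _ (hF.apply_sub_mem_Icc hx) _ hxr, hr, dotProduct_smul, hc,
    smul_eq_mul]
  ring

theorem jensen_eq (hF : IsParallelogramCoord F u₁ u₂ d₁ d₂ α)
    (hG : IsParallelogramCoord G v₁ v₂ d₁ d₃ β)
    (haddF : ∀ p ∈ F, f p.1 + g p.2 = h (p.1 + p.2))
    (haddG : ∀ p ∈ G, f p.1 + g p.2 = h (p.1 + p.2)) (hp3 : proj3 F = proj3 G)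
    {e : V2} (hαe : α e = 1) (hβe : β e = 0) {x : V2} (hx : x ∈ interior (proj3 F)) :
    ∀ᶠ t in 𝓝 0, f (u₁ + (α (x - (u₁ + u₂)) - t) • d₁) + f (u₁ + (α (x - (u₁ + u₂)) + t) • d₁) =
      2 * f (u₁ + α (x - (u₁ + u₂)) • d₁) := by
  filter_upwards [eventually_add_smul_mem hx d₁, eventually_add_smul_mem hx (-e),
    eventually_add_smul_mem hx (d₁ - e)] with t hxt hy hyt
  have hxP := interior_subset hx
  rw [show x + t • (d₁ - e) = x + t • -e + t • d₁ by module] at hyt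
  have hαy : α (x + t • -e - (u₁ + u₂)) = α (x - (u₁ + u₂)) - t := by
    rw [add_sub_right_comm, map_add, map_smul, map_neg, hαe, smul_eq_mul]; ring
  have hβy : β (x + t • -e - (v₁ + v₂)) = β (x - (v₁ + v₂)) := by
    rw [add_sub_right_comm, map_add, map_smul, map_neg, hβe]; simp
  have h₁ := hF.sub_eq_sub haddF hxP hxt
  have h₂ := hG.sub_eq_sub haddG (hp3 ▸ hxP) (hp3 ▸ hxt)
  have h₃ := hF.sub_eq_sub haddF hy hyt
  have h₄ := hG.sub_eq_sub haddG (hp3 ▸ hy) (hp3 ▸ hyt)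
  rw [hαy, sub_add_cancel] at h₃
  rw [hβy] at h₄
  linarith

theorem exists_slope (hf : Continuous f)
    (hF : IsParallelogramCoord F u₁ u₂ d₁ d₂ α) (hG : IsParallelogramCoord G v₁ v₂ d₁ d₃ β)
    (haddF : ∀ p ∈ F, f p.1 + g p.2 = h (p.1 + p.2))
    (haddG : ∀ p ∈ G, f p.1 + g p.2 = h (p.1 + p.2)) (hp3 : proj3 F = proj3 G)
    (hP : Convex ℝ (proj3 F)) (hfull : (interior (proj3 F)).Nonempty)
    {e : V2} (hαe : α e = 1) (hβe : β e = 0) :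
    ∃ C, ∀ l ∈ Icc (0 : ℝ) 1, ∀ l' ∈ Icc (0 : ℝ) 1,
      f (u₁ + l' • d₁) - f (u₁ + l • d₁) = C * (l' - l) := by
  refine exists_slope_of_eventually_midpoint (φ := fun l => f (u₁ + l • d₁)) zero_lt_one
    (by fun_prop) fun p hp => ?_
  obtain ⟨z₀, hz₀, hz₀p⟩ := hF.exists_apply_sub_eq (l := 0) (by simp)
  obtain ⟨z₁, hz₁, hz₁p⟩ := hF.exists_apply_sub_eq (l := 1) (by simp)
  rw [map_sub] at hz₀p hz₁p
  obtain ⟨x, hx, hxp⟩ := hP.exists_mem_interior_apply_eq hfull α hz₀ hz₁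
    (p := p + α (u₁ + u₂)) (by linarith [hp.1]) (by linarith [hp.2])
  have hxp' : α (x - (u₁ + u₂)) = p := by rw [map_sub, hxp, add_sub_cancel_right]
  simpa only [hxp'] using hF.jensen_eq hG haddF haddG hp3 hαe hβe hx

end IsParallelogramCoord

theorem hidden_interval_lemma_general
    (f g h : V2 → ℝ) (hf : Continuous f)
    (F Ftil : Set (V2 × V2)) (hF : Convex ℝ F)
    (hadd : ∀ p ∈ F ∪ Ftil, f p.1 + g p.2 = h (p.1 + p.2))
    (hp3 : proj3 F = proj3 Ftil) (hfull : (interior (proj3 F)).Nonempty)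
    (u1 u2 ut1 ut2 d1 d2 dt2 : V2)
    (hp1F : proj1 F = {x | ∃ l ∈ Set.Icc (0 : ℝ) 1, x = u1 + l • d1})
    (hp2F : proj2 F = {x | ∃ l ∈ Set.Icc (0 : ℝ) 1, x = u2 + l • d2})
    (hp1Ft : proj1 Ftil = {x | ∃ l ∈ Set.Icc (0 : ℝ) 1, x = ut1 + l • d1})
    (hp2Ft : proj2 Ftil = {x | ∃ l ∈ Set.Icc (0 : ℝ) 1, x = ut2 + l • dt2})
    (hli1 : LinearIndependent ℝ ![d1, d2])
    (hli2 : LinearIndependent ℝ ![d1, dt2])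
    (hli3 : LinearIndependent ℝ ![d2, dt2]) :
    ∃ c : V2,
      AffineWrtLine f (proj1 F) d1 c ∧ AffineWrtLine f (proj1 Ftil) d1 c ∧
      AffineWrtLine g (proj2 F) d1 c ∧ AffineWrtLine g (proj2 Ftil) d1 c ∧
      AffineWrtLine h (proj3 F) d1 c ∧ AffineWrtLine h (proj3 Ftil) d1 c := by
  obtain ⟨α, hα₁, hα₂, hα⟩ := exists_dual_of_linearIndependent (by simp) hli1
  obtain ⟨β, hβ₁, hβ₂, hβ⟩ := exists_dual_of_linearIndependent (by simp) hli2
  have hcF : IsParallelogramCoord F u1 u2 d1 d2 α := ⟨hp1F, hp2F, hα₁, hα₂⟩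
  have hcG : IsParallelogramCoord Ftil ut1 ut2 d1 dt2 β := ⟨hp1Ft, hp2Ft, hβ₁, hβ₂⟩
  have haddF := fun p hp => hadd p (Or.inl hp)
  have haddG := fun p hp => hadd p (Or.inr hp)
  have hαdt2 := hα dt2 hli3
  have hβd2 := hβ d2 (LinearIndependent.pair_symm_iff.1 hli3)
  obtain ⟨C, hC⟩ := hcF.exists_slope hf hcG haddF haddG hp3 (convex_proj3 hF) hfull
    (e := (α dt2)⁻¹ • dt2) (by simp [hαdt2]) (by simp [hβ₂])
  obtain ⟨C', hC'⟩ := hcG.exists_slope hf hcF haddG haddF hp3.symm (hp3 ▸ convex_proj3 hF)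
    (hp3 ▸ hfull) (e := (β d2)⁻¹ • d2) (by simp [hβd2]) (by simp [hα₂])
  obtain ⟨c, hc⟩ := exists_dotProduct_eq (hli1.ne_zero 0) C
  obtain ⟨c', hc'⟩ := exists_dotProduct_eq (hli1.ne_zero 0) C'
  have hh : AffineWrtLine h (proj3 F) d1 c := hcF.affineWrtLine_proj3 haddF hC hc
  obtain rfl : C = C' := hc ▸ hc' ▸
    hh.dotProduct_eq (hp3 ▸ hcG.affineWrtLine_proj3 haddG hC' hc') hfull
  exact ⟨c, hcF.affineWrtLine_proj1 hC hc, hcG.affineWrtLine_proj1 hC' hc,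
    hp2F ▸ affineWrtLine_of_linearIndependent g u2 d1 d2 c hli1,
    hp2Ft ▸ affineWrtLine_of_linearIndependent g ut2 d1 dt2 c hli2,
    hh, hp3 ▸ hh⟩

theorem hidden_interval_lemma
    (f g h : V2 → ℝ) (hf : Continuous f) (hg : Continuous g) (hh : Continuous h)
    (F Ftil : Set (V2 × V2)) (hF : Convex ℝ F) (hFtil : Convex ℝ Ftil)
    (hadd : ∀ p ∈ F ∪ Ftil, f p.1 + g p.2 = h (p.1 + p.2))
    (hp3 : proj3 F = proj3 Ftil) (hfull : (interior (proj3 F)).Nonempty)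
    (u1 u2 ut1 ut2 d1 d2 dt2 : V2)
    (hp1F : proj1 F = {x | ∃ l ∈ Set.Icc (0 : ℝ) 1, x = u1 + l • d1})
    (hp2F : proj2 F = {x | ∃ l ∈ Set.Icc (0 : ℝ) 1, x = u2 + l • d2})
    (hp1Ft : proj1 Ftil = {x | ∃ l ∈ Set.Icc (0 : ℝ) 1, x = ut1 + l • d1})
    (hp2Ft : proj2 Ftil = {x | ∃ l ∈ Set.Icc (0 : ℝ) 1, x = ut2 + l • dt2})
    (hli1 : LinearIndependent ℝ ![d1, d2])
    (hli2 : LinearIndependent ℝ ![d1, dt2])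
    (hli3 : LinearIndependent ℝ ![d2, dt2]) :
    ∃ c : V2,
      AffineWrtLine f (proj1 F) d1 c ∧ AffineWrtLine f (proj1 Ftil) d1 c ∧
      AffineWrtLine g (proj2 F) d1 c ∧ AffineWrtLine g (proj2 Ftil) d1 c ∧
      AffineWrtLine h (proj3 F) d1 c ∧ AffineWrtLine h (proj3 Ftil) d1 c :=
  hidden_interval_lemma_general f g h hf F Ftil hF hadd hp3 hfull u1 u2 ut1 ut2 d1 d2 dt2 hp1F hp2F
    hp1Ft hp2Ft hli1 hli2 hli3

end
end

section
/- Let T be a subcomplex of a triangulation of R^k whose vertices all lie in (1/q)Z^k. Let E be a set of valid 7-tuples τ = (I1,I2,I3,σ,t) with each I_i ∈ T, σ ∈ {-1,1}^3, t ∈ (1/q)Z^k, such that the vertex sets of the faces of each F(τ) project into the vertices of T. Let π̄_T be piecewise linear over T (determined by interpolation of its vertex values). Then π̄_T is additive over every τ ∈ E (i.e., Σσ_iπ̄_T(x_i)=0 on F(τ) for all τ) if and only if its restriction π̄_T|_{(1/q)Z^k} satisfies the corresponding additivity equations at all points of F(τ) ∩ ((1/q)Z^k)^3 for every τ ∈ E.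 -/
/-!
On each face of `T` the function `πT` is affine, so `x ↦ ∑ i, σ i * πT (x i)` agrees on `F(τ)`
with an affine map. `F(τ)` is a compact convex set, hence by Krein–Milman the closed convex hull
of its extreme points, and an affine map vanishing on those vanishes on all of `F(τ)`. The extreme
points of `F(τ)` have coordinates at vertices of `T`, hence in `(1/q)ℤᵏ`, where the lattice
equations apply.
-/

/-- `v` lies in the lattice `(1/q)ℤᵏ`. -/
def GridPt (q k : ℕ) (v : Fin k → ℝ) : Prop := ∃ z : Fin k → ℤ, v = fun i => (z i : ℝ) / q

/-- `F(I,σ,t)`: triples `x` with `x i ∈ I i` and `∑ σ i • x i = t`. -/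
def tupleF {k : ℕ} (I : Fin 3 → Set (Fin k → ℝ)) (σ : Fin 3 → ℝ) (t : Fin k → ℝ) :
    Set (Fin 3 → (Fin k → ℝ)) :=
  {x | (∀ i, x i ∈ I i) ∧ ∑ i, σ i • x i = t}

open Set

section ExtremePoints

variable {E F : Type*} [AddCommGroup E] [Module ℝ E] [TopologicalSpace E] [T2Space E]
  [IsTopologicalAddGroup E] [ContinuousSMul ℝ E] [LocallyConvexSpace ℝ E] {s : Set E}
  [AddCommGroup F] [Module ℝ F] [TopologicalSpace F] [T1Space F]

theorem ContinuousAffineMap.forall_eq_of_forall_extremePoints_eq (f : E →ᴬ[ℝ] F) (c : F)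
    (hscomp : IsCompact s) (hsconv : Convex ℝ s) (h : ∀ x ∈ s.extremePoints ℝ, f x = c) :
    ∀ x ∈ s, f x = c := by
  rw [← closure_convexHull_extremePoints hscomp hsconv]
  exact closure_minimal (convexHull_min h ((convex_singleton c).affine_preimage f.toAffineMap))
    (isClosed_singleton.preimage f.continuous)

end ExtremePoints

theorem AffineMap.sum_apply {ι k V1 P1 V2 : Type*} [Ring k] [AddCommGroup V1] [Module k V1]
    [AddTorsor V1 P1] [AddCommGroup V2] [Module k V2] (s : Finset ι) (f : ι → P1 →ᵃ[k] V2)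
    (x : P1) : (∑ i ∈ s, f i) x = ∑ i ∈ s, f i x :=
  map_sum (AddMonoidHom.mk' (fun g : P1 →ᵃ[k] V2 => g x) fun _ _ => rfl) f s

theorem exists_affineMap_eqOn_pi {ι E : Type*} [Fintype ι] [AddCommGroup E] [Module ℝ E]
    (I : ι → Set E) (σ : ι → ℝ) (π : E → ℝ) (hπ : ∀ i, ∃ a : E →ᵃ[ℝ] ℝ, EqOn π a (I i)) :
    ∃ g : (ι → E) →ᵃ[ℝ] ℝ, EqOn (fun x => ∑ i, σ i * π (x i)) g (univ.pi I) := by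
  choose a ha using hπ
  refine ⟨∑ i, σ i • (a i).comp (AffineMap.proj i), fun x hx => ?_⟩
  simp [AffineMap.sum_apply, ha _ (hx _ (mem_univ _))]

section tupleF

variable {k : ℕ} {I : Fin 3 → Set (Fin k → ℝ)} (σ : Fin 3 → ℝ) (t : Fin k → ℝ)

theorem tupleF_eq_pi_inter_preimage :
    tupleF I σ t =
      univ.pi I ∩ (∑ i, σ i • LinearMap.proj i : (Fin 3 → Fin k → ℝ) →ₗ[ℝ] Fin k → ℝ) ⁻¹' {t} := by
  ext x
  simp [tupleF]

theorem convex_tupleF (hI : ∀ i, Convex ℝ (I i)) : Convex ℝ (tupleF I σ t) := by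
  rw [tupleF_eq_pi_inter_preimage]
  exact (convex_pi fun i _ => hI i).inter ((convex_singleton t).linear_preimage _)

theorem isCompact_tupleF (hI : ∀ i, IsCompact (I i)) : IsCompact (tupleF I σ t) := by
  rw [tupleF_eq_pi_inter_preimage]
  exact (isCompact_univ_pi hI).inter_right
    (isClosed_singleton.preimage (LinearMap.continuous_of_finiteDimensional _))

end tupleF

theorem additive_iff_additive_on_lattice_general {k q : ℕ}
    (T : Set (Set (Fin k → ℝ)))
    -- T is a subcomplex of a triangulation: its faces are compact convex polytopes (simplices)
    (hT : ∀ C ∈ T, Convex ℝ C ∧ IsCompact C)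
    -- all vertices of T lie in (1/q)ℤᵏ
    (hTverts : ∀ C ∈ T, ∀ v ∈ Set.extremePoints ℝ C, GridPt q k v)
    (E : Set ((Fin 3 → Set (Fin k → ℝ)) × (Fin 3 → ℝ) × (Fin k → ℝ)))
    -- each member of E is a valid 7-tuple of faces of T with ±1 signs and lattice translate
    (hEfaces : ∀ τ ∈ E, ∀ i, τ.1 i ∈ T)
    -- the vertices of each F(τ) project into the vertices of T
    (hEFverts : ∀ τ ∈ E, ∀ x ∈ Set.extremePoints ℝ (tupleF τ.1 τ.2.1 τ.2.2),
      ∀ i, ∃ C ∈ T, x i ∈ Set.extremePoints ℝ C)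
    -- π̄_T is piecewise linear (affine) over each face of T
    (πT : (Fin k → ℝ) → ℝ)
    (hπT : ∀ C ∈ T, ∃ (l : (Fin k → ℝ) →ₗ[ℝ] ℝ) (c : ℝ), ∀ x ∈ C, πT x = l x + c) :
    (∀ τ ∈ E, ∀ x ∈ tupleF τ.1 τ.2.1 τ.2.2, ∑ i, τ.2.1 i * πT (x i) = 0) ↔
    (∀ τ ∈ E, ∀ x ∈ tupleF τ.1 τ.2.1 τ.2.2, (∀ i, GridPt q k (x i)) →
      ∑ i, τ.2.1 i * πT (x i) = 0) := by
  refine ⟨fun h τ hτ x hx _ => h τ hτ x hx, fun h τ hτ => ?_⟩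
  obtain ⟨I, σ, t⟩ := τ
  have hI : ∀ i, I i ∈ T := hEfaces _ hτ
  have hπaffine : ∀ i, ∃ a : (Fin k → ℝ) →ᵃ[ℝ] ℝ, EqOn πT a (I i) := fun i => by
    obtain ⟨l, c, hlc⟩ := hπT _ (hI i)
    exact ⟨l.toAffineMap + AffineMap.const ℝ _ c, fun x hx => by simp [hlc x hx]⟩
  obtain ⟨g, hg⟩ := exists_affineMap_eqOn_pi I σ πT hπaffine
  have hgext : ∀ x ∈ (tupleF I σ t).extremePoints ℝ, g x = 0 := fun x hx => by
    have hgrid : ∀ i, GridPt q k (x i) := fun i => by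
      obtain ⟨C, hC, hxC⟩ := hEFverts _ hτ x hx i
      exact hTverts C hC _ hxC
    rw [← hg fun i _ => hx.1.1 i]
    exact h _ hτ x hx.1 hgrid
  have hFcomp : IsCompact (tupleF I σ t) := isCompact_tupleF σ t fun i => (hT _ (hI i)).2
  have hFconv : Convex ℝ (tupleF I σ t) := convex_tupleF σ t fun i => (hT _ (hI i)).1
  let gc : (Fin 3 → Fin k → ℝ) →ᴬ[ℝ] ℝ := ⟨g, g.continuous_of_finiteDimensional⟩
  intro x hx
  exact (hg fun i _ => hx.1 i).trans <|
    gc.forall_eq_of_forall_extremePoints_eq 0 hFcomp hFconv hgext x hx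

theorem additive_iff_additive_on_lattice {k q : ℕ} (hq : 0 < q)
    (T : Set (Set (Fin k → ℝ)))
    -- T is a subcomplex of a triangulation: its faces are compact convex polytopes (simplices)
    (hT : ∀ C ∈ T, Convex ℝ C ∧ IsCompact C)
    -- all vertices of T lie in (1/q)ℤᵏ
    (hTverts : ∀ C ∈ T, ∀ v ∈ Set.extremePoints ℝ C, GridPt q k v)
    (E : Set ((Fin 3 → Set (Fin k → ℝ)) × (Fin 3 → ℝ) × (Fin k → ℝ)))
    -- each member of E is a valid 7-tuple of faces of T with ±1 signs and lattice translate
    (hEfaces : ∀ τ ∈ E, ∀ i, τ.1 i ∈ T)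
    (hEsign : ∀ τ ∈ E, ∀ i, τ.2.1 i = 1 ∨ τ.2.1 i = -1)
    (hEt : ∀ τ ∈ E, GridPt q k τ.2.2)
    (hEvalid : ∀ τ ∈ E, ∀ i, (fun x : Fin 3 → (Fin k → ℝ) => x i) ''
      tupleF τ.1 τ.2.1 τ.2.2 = τ.1 i)
    -- the vertices of each F(τ) project into the vertices of T
    (hEFverts : ∀ τ ∈ E, ∀ x ∈ Set.extremePoints ℝ (tupleF τ.1 τ.2.1 τ.2.2),
      ∀ i, ∃ C ∈ T, x i ∈ Set.extremePoints ℝ C)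
    -- π̄_T is piecewise linear (affine) over each face of T
    (πT : (Fin k → ℝ) → ℝ)
    (hπT : ∀ C ∈ T, ∃ (l : (Fin k → ℝ) →ₗ[ℝ] ℝ) (c : ℝ), ∀ x ∈ C, πT x = l x + c) :
    (∀ τ ∈ E, ∀ x ∈ tupleF τ.1 τ.2.1 τ.2.2, ∑ i, τ.2.1 i * πT (x i) = 0) ↔
    (∀ τ ∈ E, ∀ x ∈ tupleF τ.1 τ.2.1 τ.2.2, (∀ i, GridPt q k (x i)) →
      ∑ i, τ.2.1 i * πT (x i) = 0) :=
  additive_iff_additive_on_lattice_general T hT hTverts E hEfaces hEFverts πT hπT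
end

section
/- Let K = conv{v, v + (1/q)d¹, v + (1/q)d²} be a triangle of P_q with edges K1 (in direction d¹), K2 (in direction d²), K3 (the third edge). Suppose π̄ : R² → R is continuous, vanishes on (1/q)Z², vanishes identically on K1, and is additive over the 7-tuple (K1, K2, K, (1,1,−1), t¹) whose additivity set is F = {(t¹+ (λ1/q)d¹, t¹+(λ2/q)d², t¹+(λ1/q)d¹+(λ2/q)d²) : λ1,λ2 ≥ 0, λ1+λ2 ≤ 1} with t¹ = v. Then π̄ is also additive over the 7-tuple (K1, K3, K, (1,1,−1), t²) with t² = v + (1/q)d¹, whose additivity set is {(t²−(λ1/q)d¹, t²+(λ2/q)(d²−d¹), t²−(λ1/q)d¹+(λ2/q)(d²−d¹)) : λ1,λ2 ≥ 0, λ1+λ2 ≤ 1}. -/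
noncomputable section

/-- The standard basis vectors of `ℝ²`. -/
def e1 : Fin 2 → ℝ := fun i => if i = 0 then 1 else 0
def e2 : Fin 2 → ℝ := fun i => if i = 1 then 1 else 0

section
variable {E G : Type*} [AddCommGroup E] [Module ℝ E] [AddCommGroup G]

/-- Additivity over the 7-tuple `(K₁, K₂, K, (1,1,-1), p)`, where `K = conv {p, p + a, p + b}`
and `K₁`, `K₂` are its edges from `p` in directions `a`, `b`. -/
def AdditiveOnTriangle (f : E → G) (p a b : E) : Prop :=
  ∀ t u : ℝ, 0 ≤ t → 0 ≤ u → t + u ≤ 1 →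
    f (p + t • a) + f (p + u • b) - f (p + t • a + u • b) = 0

variable {f : E → G} {p a b : E}

theorem AdditiveOnTriangle.apply_add_smul_add_smul_eq (hf : AdditiveOnTriangle f p a b)
    (hzero : ∀ t ∈ Set.Icc (0 : ℝ) 1, f (p + t • a) = 0)
    {t u : ℝ} (ht : 0 ≤ t) (hu : 0 ≤ u) (htu : t + u ≤ 1) :
    f (p + t • a + u • b) = f (p + u • b) := by
  have h := hf t u ht hu htu
  rw [hzero t ⟨ht, by linarith⟩, zero_add, sub_eq_zero] at h
  exact h.symm

theorem AdditiveOnTriangle.of_vanishing_on_edge (hf : AdditiveOnTriangle f p a b)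
    (hzero : ∀ t ∈ Set.Icc (0 : ℝ) 1, f (p + t • a) = 0) :
    AdditiveOnTriangle f (p + a) (-a) (b - a) := by
  intro t u ht hu htu
  have hx : p + a + t • -a = p + (1 - t) • a := by module
  have hy : p + a + u • (b - a) = p + (1 - u) • a + u • b := by module
  have hz : p + a + t • -a + u • (b - a) = p + (1 - t - u) • a + u • b := by module
  rw [hz, hx, hy, hzero (1 - t) ⟨by linarith, by linarith⟩,
    hf.apply_add_smul_add_smul_eq hzero (by linarith) hu (by linarith),
    hf.apply_add_smul_add_smul_eq hzero (by linarith) hu (by linarith), zero_add, sub_self]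

end

theorem additive_over_second_edge_tuple_general {q : ℕ}
    (s : ℝ)
    (v : Fin 2 → ℝ)
    (πbar : (Fin 2 → ℝ) → ℝ)
    -- πbar vanishes identically on the edge K₁ = {v + (λ/q)·d¹ : λ ∈ [0,1]}
    (hK1 : ∀ l ∈ Set.Icc (0 : ℝ) 1, πbar (v + (l / q) • (s • e1)) = 0)
    -- πbar is additive over the 7-tuple (K₁, K₂, K, (1,1,−1), t¹) with t¹ = v
    (hadd : ∀ l1 l2 : ℝ, 0 ≤ l1 → 0 ≤ l2 → l1 + l2 ≤ 1 →
      πbar (v + (l1 / q) • (s • e1)) + πbar (v + (l2 / q) • (s • e2)) -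
        πbar (v + (l1 / q) • (s • e1) + (l2 / q) • (s • e2)) = 0) :
    -- conclusion: πbar is additive over (K₁, K₃, K, (1,1,−1), t²) with t² = v + (1/q)·d¹
    ∀ l1 l2 : ℝ, 0 ≤ l1 → 0 ≤ l2 → l1 + l2 ≤ 1 →
      πbar ((v + (q : ℝ)⁻¹ • (s • e1)) - (l1 / q) • (s • e1)) +
        πbar ((v + (q : ℝ)⁻¹ • (s • e1)) + (l2 / q) • (s • e2 - s • e1)) -
        πbar ((v + (q : ℝ)⁻¹ • (s • e1)) - (l1 / q) • (s • e1) +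
          (l2 / q) • (s • e2 - s • e1)) = 0 := by
  simp only [div_eq_mul_inv, mul_smul] at hK1 hadd ⊢
  have h := (show AdditiveOnTriangle πbar v ((q : ℝ)⁻¹ • s • e1) ((q : ℝ)⁻¹ • s • e2) from hadd)
    |>.of_vanishing_on_edge hK1
  simpa only [AdditiveOnTriangle, smul_neg, ← sub_eq_add_neg, smul_sub] using h

theorem additive_over_second_edge_tuple {q : ℕ} (hq : 0 < q)
    (s : ℝ) (hs : s = 1 ∨ s = -1)
    (v : Fin 2 → ℝ) (hv : ∃ z : Fin 2 → ℤ, v = fun i => (z i : ℝ) / q)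
    (πbar : (Fin 2 → ℝ) → ℝ) (hcont : Continuous πbar)
    -- πbar vanishes on the lattice (1/q)ℤ²
    (hgrid : ∀ z : Fin 2 → ℤ, πbar (fun i => (z i : ℝ) / q) = 0)
    -- πbar vanishes identically on the edge K₁ = {v + (λ/q)·d¹ : λ ∈ [0,1]}
    (hK1 : ∀ l ∈ Set.Icc (0 : ℝ) 1, πbar (v + (l / q) • (s • e1)) = 0)
    -- πbar is additive over the 7-tuple (K₁, K₂, K, (1,1,−1), t¹) with t¹ = v
    (hadd : ∀ l1 l2 : ℝ, 0 ≤ l1 → 0 ≤ l2 → l1 + l2 ≤ 1 →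
      πbar (v + (l1 / q) • (s • e1)) + πbar (v + (l2 / q) • (s • e2)) -
        πbar (v + (l1 / q) • (s • e1) + (l2 / q) • (s • e2)) = 0) :
    -- conclusion: πbar is additive over (K₁, K₃, K, (1,1,−1), t²) with t² = v + (1/q)·d¹
    ∀ l1 l2 : ℝ, 0 ≤ l1 → 0 ≤ l2 → l1 + l2 ≤ 1 →
      πbar ((v + (q : ℝ)⁻¹ • (s • e1)) - (l1 / q) • (s • e1)) +
        πbar ((v + (q : ℝ)⁻¹ • (s • e1)) + (l2 / q) • (s • e2 - s • e1)) -
        πbar ((v + (q : ℝ)⁻¹ • (s • e1)) - (l1 / q) • (s • e1) +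
          (l2 / q) • (s • e2 - s • e1)) = 0 :=
  additive_over_second_edge_tuple_general s v πbar hK1 hadd

end
end
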